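/- Let $X$ and $Q$ be operators on a finite-dimensional Hilbert space with $0 \le X \le I$ and $0 \le Q \le I$ (positive semidefinite contractions). Then $\frac{1}{2} Q^{1/2} X Q^{1/2} \le I - Q + X$. -/

import Mathlib

open Matrix
open scoped ComplexOrder

noncomputable def Matrix.PosSemidef.sqrt {n : Type*} [Fintype n] [DecidableEq n] {𝕜 : Type*} [RCLike 𝕜]
    {A : Matrix n n 𝕜} (hA : A.PosSemidef) : Matrix n n 𝕜 :=
  hA.1.eigenvectorUnitary.1 * diagonal ((↑) ∘ (√·) ∘ hA.1.eigenvalues) *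
    (star hA.1.eigenvectorUnitary : Matrix n n 𝕜)

noncomputable def matAbs {m : ℕ} (A : Matrix (Fin m) (Fin m) ℂ) : Matrix (Fin m) (Fin m) ℂ :=
  (Matrix.posSemidef_conjTranspose_mul_self A).sqrt

noncomputable def traceNorm {m : ℕ} (A : Matrix (Fin m) (Fin m) ℂ) : ℝ :=
  ((matAbs A).trace).re

open Classical in
noncomputable def psdSqrt {m : ℕ} (A : Matrix (Fin m) (Fin m) ℂ) : Matrix (Fin m) (Fin m) ℂ :=
  if h : A.PosSemidef then h.sqrt else 0

noncomputable def fid {m : ℕ} (A B : Matrix (Fin m) (Fin m) ℂ) : ℝ :=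
  traceNorm (psdSqrt A * psdSqrt B)

noncomputable def matPosPart {m : ℕ} (A : Matrix (Fin m) (Fin m) ℂ) : Matrix (Fin m) (Fin m) ℂ :=
  (2⁻¹ : ℂ) • (matAbs A + A)

noncomputable def matNegPart {m : ℕ} (A : Matrix (Fin m) (Fin m) ℂ) : Matrix (Fin m) (Fin m) ℂ :=
  (2⁻¹ : ℂ) • (matAbs A - A)

/-!
Put `S = Q^{1/2}`. From `0 ≤ Q ≤ 1` we get `S ≤ 1` and `Q = S² ≤ S`, and then
`2 (1 - Q + X) - S X S = (2 - S) X (2 - S) + 2 (1 - S)(1 - X)(1 - S) + 4 (S - S²)`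
exhibits the difference as a sum of positive operators.
-/

open scoped MatrixOrder

section StarOrderedRing

variable {A : Type*} [Ring A] [StarRing A] [PartialOrder A] [StarOrderedRing A]

theorem mul_mul_le_two_mul_one_sub_mul_self_add {s x : A} (hs1 : s ≤ 1) (hss : s * s ≤ s)
    (hx0 : 0 ≤ x) (hx1 : x ≤ 1) : s * x * s ≤ 2 * (1 - s * s + x) := by
  have hs : IsSelfAdjoint s := .of_le hs1 (.one A)
  have key : 2 * (1 - s * s + x) - s * x * s =
      (2 - s) * x * (2 - s) + 2 • ((1 - s) * (1 - x) * (1 - s)) + 4 • (s - s * s) := by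
    noncomm_ring
  rw [← sub_nonneg, key]
  refine add_nonneg (add_nonneg ?_ (nsmul_nonneg ?_ 2)) (nsmul_nonneg (sub_nonneg.2 hss) 4)
  · exact ((IsSelfAdjoint.ofNat 2).sub hs).conjugate_nonneg hx0
  · exact ((IsSelfAdjoint.one A).sub hs).conjugate_nonneg (sub_nonneg.2 hx1)

end StarOrderedRing

section ContinuousFunctionalCalculus

variable {A : Type*} [Ring A] [StarRing A] [Algebra ℝ A] [TopologicalSpace A]
  [ContinuousFunctionalCalculus ℝ A IsSelfAdjoint] [PartialOrder A] [StarOrderedRing A]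
  [NonnegSpectrumClass ℝ A] {a : A}

theorem cfc_sqrt_mul_self (ha : 0 ≤ a) : cfc Real.sqrt a * cfc Real.sqrt a = a := by
  conv_rhs => rw [← cfc_id' ℝ a]
  rw [← cfc_mul ..]
  exact cfc_congr fun x hx ↦ Real.mul_self_sqrt (spectrum_nonneg_of_nonneg ha hx)

theorem cfc_sqrt_le_one (ha : a ≤ 1) : cfc Real.sqrt a ≤ 1 :=
  cfc_le_one _ _ fun x hx ↦ Real.sqrt_le_one.2 <|
    (CFC.le_one_iff a (.of_le ha (.one A))).1 ha x hx

theorem le_cfc_sqrt (ha : a ≤ 1) : a ≤ cfc Real.sqrt a := by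
  have hsa : IsSelfAdjoint a := .of_le ha (.one A)
  conv_lhs => rw [← cfc_id' ℝ a]
  exact cfc_mono fun x hx ↦ Real.le_sqrt_self_iff.2 <| (CFC.le_one_iff a hsa).1 ha x hx

end ContinuousFunctionalCalculus

theorem Matrix.PosSemidef.sqrt_eq_cfc {n 𝕜 : Type*} [Fintype n] [DecidableEq n] [RCLike 𝕜]
    {A : Matrix n n 𝕜} (hA : A.PosSemidef) : hA.sqrt = cfc Real.sqrt A := by
  rw [hA.1.cfc_eq, IsHermitian.cfc, Unitary.conjStarAlgAut_apply]
  rfl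

theorem nussbaum_povm_lemma {d : ℕ} (X Q : Matrix (Fin d) (Fin d) ℂ)
    (hX : X.PosSemidef) (hX1 : (1 - X).PosSemidef)
    (hQ : Q.PosSemidef) (hQ1 : (1 - Q).PosSemidef) :
    (1 - Q + X - (2⁻¹ : ℂ) • (hQ.sqrt * X * hQ.sqrt)).PosSemidef := by
  have hQle : Q ≤ 1 := Matrix.le_iff.2 hQ1
  have hSS : cfc Real.sqrt Q * cfc Real.sqrt Q = Q := cfc_sqrt_mul_self hQ.nonneg
  have h := mul_mul_le_two_mul_one_sub_mul_self_add (cfc_sqrt_le_one hQle)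
    (by rw [hSS]; exact le_cfc_sqrt hQle) hX.nonneg (Matrix.le_iff.2 hX1)
  rw [hSS, Matrix.le_iff] at h
  have hhalf : 1 - Q + X - (2⁻¹ : ℂ) • (hQ.sqrt * X * hQ.sqrt) =
      (2⁻¹ : ℂ) • (2 * (1 - Q + X) - cfc Real.sqrt Q * X * cfc Real.sqrt Q) := by
    rw [hQ.sqrt_eq_cfc, smul_sub, two_mul, ← two_smul ℂ, smul_smul]
    norm_num
  rw [hhalf]
  exact h.smul (inv_nonneg.2 zero_le_two)
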